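/- For every n ≥ 2, the natural monoid homomorphism from the dihedral Artin monoid DA_n⁺ to the dihedral Artin group DA_n (induced by the identity on the generators a, b) is injective. -/

import Mathlib

/-! ## Core: words, dihedral Artin monoid and group -/

namespace ArtinSys

/-- The two-letter alphabet `{a, b}`. -/
abbrev Letter : Type := Fin 2

/-- The letter `a`. -/
def la : Letter := 0
/-- The letter `b`. -/
def lb : Letter := 1

/-- The alternating list `x, y, x, y, …` of length `n`. -/
def altList (x y : Letter) : ℕ → List Letter
  | 0 => []
  | n + 1 => x :: altList y x n

/-- The alternating word `prod(x, y; n) = x y x ⋯` of length `n` in the free monoid. -/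
def altWord (x y : Letter) (n : ℕ) : FreeMonoid Letter := FreeMonoid.ofList (altList x y n)

/-- The congruence on the free monoid on `{a,b}` generated by the braid relation
`prod(a,b;n) = prod(b,a;n)`. -/
def braidCon (n : ℕ) : Con (FreeMonoid Letter) :=
  conGen (fun w₁ w₂ => w₁ = altWord la lb n ∧ w₂ = altWord lb la n)

/-- The dihedral Artin monoid `DA_n⁺`. -/
abbrev DAM (n : ℕ) : Type := (braidCon n).Quotient

/-- The canonical monoid homomorphism from the free monoid to the free group. -/
def toFG : FreeMonoid Letter →* FreeGroup Letter := FreeMonoid.lift FreeGroup.of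

/-- The braid relator `prod(a,b;n) · prod(b,a;n)⁻¹` as a singleton set of relators. -/
def braidRels (n : ℕ) : Set (FreeGroup Letter) :=
  {toFG (altWord la lb n) * (toFG (altWord lb la n))⁻¹}

/-- The dihedral Artin group `DA_n = ⟨a, b ∣ prod(a,b;n) = prod(b,a;n)⟩`. -/
abbrev DA (n : ℕ) : Type := PresentedGroup (braidRels n)

/-- The canonical monoid homomorphism from the free monoid on `{a,b}` to `DA_n`,
sending each generator to itself. -/
def toDA (n : ℕ) : FreeMonoid Letter →* DA n :=
  FreeMonoid.lift (fun s => PresentedGroup.of (rels := braidRels n) s)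

theorem braidCon_le_ker (n : ℕ) : braidCon n ≤ Con.ker (toDA n) := by
  apply Con.conGen_le.2
  intro w₁ w₂ hw
  obtain ⟨h1, h2⟩ := hw
  subst h1; subst h2
  show toDA n (altWord la lb n) = toDA n (altWord lb la n)
  have key : ∀ w : FreeMonoid Letter,
      toDA n w = QuotientGroup.mk (s := Subgroup.normalClosure (braidRels n)) (toFG w) := by
    intro w
    induction w using FreeMonoid.recOn with
    | one => simp [map_one]; rfl
    | of_mul x xs ih =>
        rw [map_mul, map_mul, QuotientGroup.mk_mul, ih]
        congr 1
  rw [key, key]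
  have : (QuotientGroup.mk (s := Subgroup.normalClosure (braidRels n))
      (toFG (altWord la lb n) * (toFG (altWord lb la n))⁻¹)) = 1 := by
    rw [QuotientGroup.eq_one_iff]
    exact Subgroup.subset_normalClosure rfl
  rw [QuotientGroup.eq_one_iff] at this
  show (QuotientGroup.mk (s := Subgroup.normalClosure (braidRels n)) (toFG (altWord la lb n)) :
      FreeGroup Letter ⧸ Subgroup.normalClosure (braidRels n)) =
    QuotientGroup.mk (toFG (altWord lb la n))
  rw [QuotientGroup.eq_iff_div_mem]
  simpa [div_eq_mul_inv] using this

/-- The natural monoid homomorphism `DA_n⁺ →* DA_n` induced by the identity on generators. -/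
def DAMtoDA (n : ℕ) : DAM n →* DA n := Con.lift _ (toDA n) (braidCon_le_ker n)

end ArtinSys

namespace ArtinSys

/-! ## The vertices `u_i`, `d_i` of a precell, and the complex `X` for `DA_n` -/

/-- The element of `DA_n` represented by the length-`i` prefix of `prod(x,y;n)`. -/
def uu (n : ℕ) (x y : Letter) (i : ℕ) : DA n := toDA n (altWord x y i)

/-- `u_i`: the vertex of the boundary of the base cell at distance `i` from `l`
along the upper half (reading `prod(a,b;n)`).  In particular `uA n 0 = l = 1` and
`uA n n = r`. -/
abbrev uA (n i : ℕ) : DA n := uu n la lb i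

/-- `d_i`: the vertex of the boundary of the base cell at distance `i` from `l`
along the lower half (reading `prod(b,a;n)`). -/
abbrev uB (n i : ℕ) : DA n := uu n lb la i

/-- Vertices of the complex `X` for `DA_n`:  `Sum.inl g` is the real vertex `g`
(a vertex of `X*`), and `Sum.inr (g, k)` is the interior vertex `c_k` of the cell
`gΠ` (valid for `1 ≤ k ≤ n - 2`). -/
abbrev XV (n : ℕ) : Type := DA n ⊕ DA n × ℕ

/-- Adjacency between two real vertices: either a Cayley edge of `X*`
(labelled by a generator), or (only when `n = 2`) the added diagonal `l r` of a cell. -/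
def rAdj (n : ℕ) (x y : DA n) : Prop :=
  (∃ s : Letter, y = x * PresentedGroup.of (rels := braidRels n) s) ∨
    (n = 2 ∧ y = x * uA n 2)

/-- Adjacency between a real vertex `v` and the interior vertex `c_k` of the cell `gΠ`:
`c_k` is adjacent to `u_k, u_{k+1}, d_k, d_{k+1}`, and moreover to `l` when `k = 1`
and to `r` when `k = n - 2`. -/
def riAdj (n : ℕ) (v g : DA n) (k : ℕ) : Prop :=
  1 ≤ k ∧ k + 2 ≤ n ∧
    (v = g * uA n k ∨ v = g * uA n (k + 1) ∨ v = g * uB n k ∨ v = g * uB n (k + 1) ∨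
      (k = 1 ∧ v = g) ∨ (k + 2 = n ∧ v = g * uA n n))

/-- The zigzag edges between interior vertices of the cells `gΠ` and `g·u_i⁻¹Π`
(resp. `g·d_i⁻¹Π`): the `DA_n`-equivariant propagation of the base edges
`c_j — u_i⁻¹c_{j+i}` (`1 ≤ j ≤ n-2-i`) and `c_j — u_i⁻¹c_{j+i-1}` (`1 ≤ j ≤ n-1-i`). -/
def zzAdj (n : ℕ) (g h : DA n) (j k : ℕ) : Prop :=
  ∃ i, 1 ≤ i ∧ i + 2 ≤ n ∧ (h = g * (uA n i)⁻¹ ∨ h = g * (uB n i)⁻¹) ∧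
    ((1 ≤ j ∧ j + i + 2 ≤ n ∧ k = j + i) ∨ (1 ≤ j ∧ j + i + 1 ≤ n ∧ k = j + i - 1))

/-- Adjacency between interior vertices `c_j ∈ gΠ` and `c_k ∈ hΠ`: either consecutive
interior vertices of the same cell, or a zigzag edge. -/
def iiAdj (n : ℕ) (g h : DA n) (j k : ℕ) : Prop :=
  1 ≤ j ∧ j + 2 ≤ n ∧ 1 ≤ k ∧ k + 2 ≤ n ∧ ((g = h ∧ k = j + 1) ∨ zzAdj n g h j k)

/-- Unsymmetrized adjacency relation of the `1`-skeleton of `X`. -/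
def preAdj (n : ℕ) : XV n → XV n → Prop
  | Sum.inl x, Sum.inl y => rAdj n x y
  | Sum.inl v, Sum.inr p => riAdj n v p.1 p.2
  | Sum.inr _, Sum.inl _ => False
  | Sum.inr p, Sum.inr q => iiAdj n p.1 q.1 p.2 q.2

/-- The `1`-skeleton `X⁽¹⁾` of the complex `X` for `DA_n` (the complex `X` itself is
the flag completion of this graph, so it is entirely determined by this graph). -/
def Xgraph (n : ℕ) : SimpleGraph (XV n) where
  Adj x y := x ≠ y ∧ (preAdj n x y ∨ preAdj n y x)
  symm := ⟨fun x y h => ⟨h.1.symm, h.2.symm⟩⟩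
  loopless := ⟨fun x h => h.1 rfl⟩

/-! ## Model graphs, prisms, 6-largeness, links -/

/-- `W` and `W'` span a prism in `G`: they are disjoint, each spans a complete subgraph,
they have the same cardinality, and `W` can be ordered `w_1, …, w_m` so that the sets
`W'_i` of vertices of `W'` adjacent to `w_i` form a strictly decreasing chain
`W'_1 ⊋ W'_2 ⊋ ⋯ ⊋ W'_m`. -/
def SpanPrism {V : Type*} (G : SimpleGraph V) (W W' : Set V) : Prop :=
  Disjoint W W' ∧ G.IsClique W ∧ G.IsClique W' ∧
    ∃ (m : ℕ) (w : Fin m → V), Function.Injective w ∧ Set.range w = W ∧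
      W'.Finite ∧ W'.ncard = m ∧
      ∀ i j : Fin m, i < j →
        {y | y ∈ W' ∧ G.Adj (w j) y} ⊂ {y | y ∈ W' ∧ G.Adj (w i) y}

/-- The full subgraph of `G` spanned by `S` is a model graph with respect to the
partition `S = {cl} ⊔ {cr} ⊔ Ul ⊔ Ur ⊔ Dl ⊔ Dr`:
(1) the vertices of `S` adjacent to `cl` (resp. `cr`) are exactly `Ul ∪ Dl`
(resp. `Ur ∪ Dr`); (2) there are no edges between `Ul ∪ Ur` and `Dl ∪ Dr`;
(3) `Ul` and `Ur` span a prism; (4) `Dl` and `Dr` span a prism. -/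
def ModelGraphOn {V : Type*} (G : SimpleGraph V) (S : Set V)
    (cl cr : V) (Ul Ur Dl Dr : Set V) : Prop :=
  cl ∈ S ∧ cr ∈ S ∧ cl ≠ cr ∧
    S = {cl} ∪ {cr} ∪ Ul ∪ Ur ∪ Dl ∪ Dr ∧
    cl ∉ Ul ∪ Ur ∪ Dl ∪ Dr ∧ cr ∉ Ul ∪ Ur ∪ Dl ∪ Dr ∧
    Disjoint Ul Ur ∧ Disjoint Ul Dl ∧ Disjoint Ul Dr ∧
    Disjoint Ur Dl ∧ Disjoint Ur Dr ∧ Disjoint Dl Dr ∧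
    {v | v ∈ S ∧ G.Adj cl v} = Ul ∪ Dl ∧
    {v | v ∈ S ∧ G.Adj cr v} = Ur ∪ Dr ∧
    (∀ x ∈ Ul ∪ Ur, ∀ y ∈ Dl ∪ Dr, ¬ G.Adj x y) ∧
    SpanPrism G Ul Ur ∧ SpanPrism G Dl Dr

/-- The full subgraph of `G` spanned by `S` contains an induced (full) simple cycle
of length `m`: an injective map `ZMod m → S` such that two image vertices are adjacent
iff they are consecutive. -/
def IsInducedCycleOn {V : Type*} (G : SimpleGraph V) (S : Set V) (m : ℕ) : Prop :=
  ∃ f : ZMod m → V, (∀ i, f i ∈ S) ∧ Function.Injective f ∧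
    ∀ i j : ZMod m, G.Adj (f i) (f j) ↔ (j = i + 1 ∨ i = j + 1)

/-- The full subgraph of `G` spanned by `S` is `6`-large: it contains no full (induced)
simple cycle of length `4` or `5`. -/
def SixLargeOn {V : Type*} (G : SimpleGraph V) (S : Set V) : Prop :=
  ¬ IsInducedCycleOn G S 4 ∧ ¬ IsInducedCycleOn G S 5

/-- The edge-path distance between `x` and `y` within the full subgraph of `G`
spanned by `S` (the length of a shortest walk from `x` to `y` all of whose vertices
lie in `S`). -/
noncomputable def distOn {V : Type*} (G : SimpleGraph V) (S : Set V) (x y : V) : ℕ :=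
  sInf {k | ∃ p : G.Walk x y, (∀ u ∈ p.support, u ∈ S) ∧ p.length = k}

/-! ## Auxiliary development: injectivity of `DAM n →* DA n` -/

namespace Inj

open FreeMonoid OreLocalization

/-- The other letter. -/
def other (t : Letter) : Letter := if t = la then lb else la

lemma other_la : other la = lb := by decide
lemma other_lb : other lb = la := by decide
lemma other_other (t : Letter) : other (other t) = t := by revert t; decide
lemma other_ne (t : Letter) : other t ≠ t := by revert t; decide

/-- The relator word starting with `t`. -/
def rel (n : ℕ) (t : Letter) : List Letter := altList t (other t) n

/-- The tail of the relator word starting with `t`. -/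
def relT (n : ℕ) (t : Letter) : List Letter := altList (other t) t (n - 1)

lemma altList_succ_last (x y : Letter) :
    ∀ m, altList x y (m + 1) = altList x y m ++ [if Even m then x else y] := by
  intro m
  induction m generalizing x y with
  | zero => simp [altList]
  | succ m ih =>
    show x :: altList y x (m + 1) = (x :: altList y x m) ++ _
    rw [ih y x]
    have hpar : (if Even (m + 1) then x else y) = (if Even m then y else x) := by
      by_cases h : Even m <;> simp [h, Nat.even_add_one]
    rw [hpar]
    simp

lemma altList_reverse (x y : Letter) :
    ∀ m, (altList x y m).reverse =
      altList (if Even m then y else x) (if Even m then x else y) m := by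
  intro m
  induction m generalizing x y with
  | zero => simp [altList]
  | succ m ih =>
    rw [altList_succ_last, List.reverse_append, ih]
    by_cases h : Even m <;>
      simp [h, Nat.even_add_one, altList]

lemma rel_cons {n : ℕ} (hn : 1 ≤ n) (t : Letter) : rel n t = t :: relT n t := by
  unfold rel relT
  conv_lhs => rw [← Nat.succ_pred_eq_of_pos hn]
  rfl

lemma rel_la {n : ℕ} : rel n la = altList la lb n := by
  unfold rel; rw [other_la]

lemma rel_lb {n : ℕ} : rel n lb = altList lb la n := by
  unfold rel; rw [other_lb]

/-- One elementary rewriting step using the braid relation. -/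
def Step (n : ℕ) (w₁ w₂ : List Letter) : Prop :=
  ∃ t u v, w₁ = u ++ (rel n t ++ v) ∧ w₂ = u ++ (rel n (other t) ++ v)

lemma Step.symm {n : ℕ} {w₁ w₂ : List Letter} (h : Step n w₁ w₂) : Step n w₂ w₁ := by
  obtain ⟨t, u, v, h1, h2⟩ := h
  exact ⟨other t, u, v, h2, by rwa [other_other]⟩

/-- Chains of elementary steps, of a given length. -/
inductive Chain (n : ℕ) : ℕ → List Letter → List Letter → Prop
  | refl (w) : Chain n 0 w w
  | cons {k w₁ w₂ w₃} : Step n w₁ w₂ → Chain n k w₂ w₃ → Chain n (k + 1) w₁ w₃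

lemma chain_zero {n : ℕ} {a b : List Letter} (h : Chain n 0 a b) : a = b := by
  cases h; rfl

lemma chain_succ {n k : ℕ} {a c : List Letter} (h : Chain n (k + 1) a c) :
    ∃ b, Step n a b ∧ Chain n k b c := by
  cases h with
  | cons hs hc => exact ⟨_, hs, hc⟩

lemma Chain.trans {n j k : ℕ} {a b c : List Letter}
    (h1 : Chain n j a b) (h2 : Chain n k b c) : Chain n (j + k) a c := by
  induction h1 with
  | refl w => simpa using h2
  | cons hs _ ih =>
    have : Chain n ((_ + k) + 1) _ c := Chain.cons hs (ih h2)
    simpa [Nat.succ_add] using this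

lemma Chain.snoc {n k : ℕ} {a b c : List Letter}
    (h1 : Chain n k a b) (h2 : Step n b c) : Chain n (k + 1) a c :=
  h1.trans (Chain.cons h2 (Chain.refl c))

lemma Chain.symm {n k : ℕ} {a b : List Letter} (h : Chain n k a b) : Chain n k b a := by
  induction h with
  | refl w => exact Chain.refl w
  | cons hs _ ih => exact ih.snoc hs.symm

lemma step_append_left {n : ℕ} (u : List Letter) {a b : List Letter}
    (h : Step n a b) : Step n (u ++ a) (u ++ b) := by
  obtain ⟨t, u₁, v, rfl, rfl⟩ := h
  exact ⟨t, u ++ u₁, v, by simp, by simp⟩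

lemma step_append_right {n : ℕ} {a b : List Letter} (h : Step n a b) (v : List Letter) :
    Step n (a ++ v) (b ++ v) := by
  obtain ⟨t, u₁, v₁, rfl, rfl⟩ := h
  exact ⟨t, u₁, v₁ ++ v, by simp, by simp⟩

lemma chain_append_left {n k : ℕ} (u : List Letter) {a b : List Letter}
    (h : Chain n k a b) : Chain n k (u ++ a) (u ++ b) := by
  induction h with
  | refl w => exact Chain.refl _
  | cons hs _ ih => exact Chain.cons (step_append_left u hs) ih

lemma chain_append_right {n k : ℕ} {a b : List Letter}
    (h : Chain n k a b) (v : List Letter) : Chain n k (a ++ v) (b ++ v) := by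
  induction h with
  | refl w => exact Chain.refl _
  | cons hs _ ih => exact Chain.cons (step_append_right hs v) ih

lemma step_head {n : ℕ} (hn : 1 ≤ n) {s : Letter} {x z : List Letter}
    (h : Step n (s :: x) z) :
    (∃ x₁, z = s :: x₁ ∧ Step n x x₁) ∨
      (∃ v, x = relT n s ++ v ∧ z = other s :: (relT n (other s) ++ v)) := by
  obtain ⟨t, u, v, h1, h2⟩ := h
  cases u with
  | nil =>
    simp only [List.nil_append] at h1 h2
    rw [rel_cons hn, List.cons_append] at h1
    injection h1 with hs hx
    subst hs
    right
    refine ⟨v, hx, ?_⟩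
    rw [h2, rel_cons hn, List.cons_append]
  | cons c u' =>
    rw [List.cons_append] at h1 h2
    injection h1 with hs hx
    subst hs
    left
    exact ⟨u' ++ (rel n (other t) ++ v), h2, ⟨t, u', v, hx, rfl⟩⟩

lemma segment {n : ℕ} (hn : 1 ≤ n) :
    ∀ (k : ℕ) (z y : List Letter) (t : Letter),
      Chain n k (t :: z) (other t :: y) →
      ∃ j₁ j₂ r, j₁ + 1 + j₂ = k ∧ Chain n j₁ z (relT n t ++ r) ∧
        Chain n j₂ (other t :: (relT n (other t) ++ r)) (other t :: y) := by
  intro k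
  induction k with
  | zero =>
    intro z y t h
    have heq := chain_zero h
    injection heq with h1 _
    exact absurd h1.symm (other_ne t)
  | succ k ih =>
    intro z y t h
    obtain ⟨w₂, hst, hrest⟩ := chain_succ h
    rcases step_head hn hst with ⟨x₁, rfl, hs⟩ | ⟨v, hx, hz⟩
    · obtain ⟨j₁, j₂, r, hsum, c1, c2⟩ := ih x₁ y t hrest
      exact ⟨j₁ + 1, j₂, r, by omega, Chain.cons hs c1, c2⟩
    · subst hz
      refine ⟨0, k, v, by omega, ?_, hrest⟩
      rw [hx]
      exact Chain.refl _

lemma cancel_head {n : ℕ} (hn : 1 ≤ n) :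
    ∀ (k : ℕ) (s : Letter) (x y : List Letter),
      Chain n k (s :: x) (s :: y) → ∃ j, j ≤ k ∧ Chain n j x y := by
  intro k
  induction k using Nat.strong_induction_on with
  | _ k IH =>
    intro s x y h
    cases k with
    | zero =>
      have heq := chain_zero h
      injection heq with _ h2
      refine ⟨0, le_rfl, ?_⟩
      rw [h2]
      exact Chain.refl _
    | succ m =>
      obtain ⟨w₂, hst, hrest⟩ := chain_succ h
      rcases step_head hn hst with ⟨x₁, rfl, hs⟩ | ⟨v, hx, hz⟩
      · obtain ⟨j, hj, c⟩ := IH m (by omega) s x₁ y hrest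
        exact ⟨j + 1, by omega, Chain.cons hs c⟩
      · subst hz
        have hrest' : Chain n m (other s :: (relT n (other s) ++ v))
            (other (other s) :: y) := by rwa [other_other]
        obtain ⟨j₁, j₂, r, hsum, c1, c2⟩ := segment hn m _ y (other s) hrest'
        rw [other_other] at c2
        have cancelPref : ∀ (p : List Letter) (j : ℕ), j < m + 1 →
            ∀ a b, Chain n j (p ++ a) (p ++ b) → ∃ j', j' ≤ j ∧ Chain n j' a b := by
          intro p
          induction p with
          | nil => exact fun j _ a b hc => ⟨j, le_rfl, by simpa using hc⟩
          | cons c p ihp =>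
            intro j hj a b hc
            obtain ⟨j₂', hj₂', h₂⟩ := IH j hj c (p ++ a) (p ++ b) (by simpa using hc)
            obtain ⟨j', hj', h'⟩ := ihp j₂' (by omega) a b h₂
            exact ⟨j', by omega, h'⟩
        obtain ⟨j₁', hj₁', cv⟩ := cancelPref (relT n (other s)) j₁ (by omega) v r c1
        obtain ⟨j₂', hj₂', c2'⟩ := IH j₂ (by omega) s (relT n s ++ r) y c2
        refine ⟨j₁' + j₂', by omega, ?_⟩
        have cx : Chain n j₁' (relT n s ++ v) (relT n s ++ r) := chain_append_left _ cv
        rw [hx]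
        exact cx.trans c2'

lemma rel_reverse {n : ℕ} (t : Letter) :
    (rel n t).reverse = rel n (if Even n then other t else t) := by
  unfold rel
  rw [altList_reverse]
  by_cases h : Even n <;> simp [h, other_other]

lemma step_reverse {n : ℕ} {a b : List Letter} (h : Step n a b) :
    Step n a.reverse b.reverse := by
  obtain ⟨t, u, v, rfl, rfl⟩ := h
  refine ⟨if Even n then other t else t, v.reverse, u.reverse, ?_, ?_⟩ <;>
    by_cases h : Even n <;>
      simp [List.reverse_append, List.append_assoc, rel_reverse, h, other_other]

lemma chain_reverse {n k : ℕ} {a b : List Letter} (h : Chain n k a b) :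
    Chain n k a.reverse b.reverse := by
  induction h with
  | refl w => exact Chain.refl _
  | cons hs _ ih => exact Chain.cons (step_reverse hs) ih

lemma cancel_last {n : ℕ} (hn : 1 ≤ n) (k : ℕ) (s : Letter) (x y : List Letter)
    (h : Chain n k (x ++ [s]) (y ++ [s])) : ∃ j, j ≤ k ∧ Chain n j x y := by
  have h' := chain_reverse h
  simp only [List.reverse_append, List.reverse_singleton, List.singleton_append] at h'
  obtain ⟨j, hj, c⟩ := cancel_head hn k s _ _ h'
  refine ⟨j, hj, ?_⟩
  have := chain_reverse c
  simpa using this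

/-- The congruence defined by chains of elementary steps. -/
def chainCon (n : ℕ) : Con (FreeMonoid Letter) where
  r x y := ∃ k, Chain n k (toList x) (toList y)
  iseqv :=
    ⟨fun _ => ⟨0, Chain.refl _⟩, fun ⟨k, c⟩ => ⟨k, c.symm⟩,
      fun ⟨j, c1⟩ ⟨k, c2⟩ => ⟨j + k, c1.trans c2⟩⟩
  mul' := fun ⟨j, c1⟩ ⟨k, c2⟩ =>
    ⟨j + k, (chain_append_right c1 _).trans (chain_append_left _ c2)⟩

lemma rel_con {n : ℕ} (t : Letter) :
    braidCon n (ofList (rel n t)) (ofList (rel n (other t))) := by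
  have base : braidCon n (altWord la lb n) (altWord lb la n) :=
    ConGen.Rel.of _ _ ⟨rfl, rfl⟩
  rcases (show t = la ∨ t = lb by revert t; decide) with rfl | rfl
  · rw [rel_la, other_la, rel_lb]
    exact base
  · rw [rel_lb, other_lb, rel_la]
    exact ConGen.Rel.symm base

lemma chain_to_con {n k : ℕ} {l₁ l₂ : List Letter} (h : Chain n k l₁ l₂) :
    braidCon n (ofList l₁) (ofList l₂) := by
  induction h with
  | refl w => exact (braidCon n).refl _
  | cons hst _ ih =>
    refine (braidCon n).trans ?_ ih
    obtain ⟨t, u, v, rfl, rfl⟩ := hst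
    rw [ofList_append, ofList_append, ofList_append, ofList_append]
    exact (braidCon n).mul ((braidCon n).refl _)
      ((braidCon n).mul (rel_con t) ((braidCon n).refl _))

lemma con_iff_chain {n : ℕ} (x y : FreeMonoid Letter) :
    braidCon n x y ↔ ∃ k, Chain n k (toList x) (toList y) := by
  constructor
  · intro h
    have hle : braidCon n ≤ chainCon n := by
      apply Con.conGen_le.2
      rintro x y ⟨rfl, rfl⟩
      refine ⟨1, Chain.cons ⟨la, [], [], ?_, ?_⟩ (Chain.refl _)⟩
      · show altList la lb n = [] ++ (rel n la ++ [])
        simp [rel_la]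
      · show altList lb la n = [] ++ (rel n (other la) ++ [])
        simp [other_la, rel_lb]
    exact hle h
  · rintro ⟨k, c⟩
    exact chain_to_con c

lemma dam_eq_iff {n : ℕ} {x y : FreeMonoid Letter} :
    (x : DAM n) = y ↔ ∃ k, Chain n k (toList x) (toList y) := by
  rw [Con.eq, con_iff_chain]

lemma gen_left_cancel {n : ℕ} (hn : 1 ≤ n) (s : Letter) (u v : DAM n)
    (h : ((FreeMonoid.of s : FreeMonoid Letter) : DAM n) * u
        = ((FreeMonoid.of s : FreeMonoid Letter) : DAM n) * v) : u = v := by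
  refine Con.induction_on₂ (C := fun u v =>
    ((FreeMonoid.of s : FreeMonoid Letter) : DAM n) * u
        = ((FreeMonoid.of s : FreeMonoid Letter) : DAM n) * v → u = v) u v ?_ h
  intro u₀ v₀ h
  rw [← Con.coe_mul, ← Con.coe_mul, dam_eq_iff] at h
  obtain ⟨k, c⟩ := h
  have c0 : Chain n k (s :: toList u₀) (s :: toList v₀) := c
  obtain ⟨j, _, c'⟩ := cancel_head hn k s (toList u₀) (toList v₀) c0
  exact dam_eq_iff.mpr ⟨j, c'⟩

lemma gen_right_cancel {n : ℕ} (hn : 1 ≤ n) (s : Letter) (u v : DAM n)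
    (h : u * ((FreeMonoid.of s : FreeMonoid Letter) : DAM n)
        = v * ((FreeMonoid.of s : FreeMonoid Letter) : DAM n)) : u = v := by
  refine Con.induction_on₂ (C := fun u v =>
    u * ((FreeMonoid.of s : FreeMonoid Letter) : DAM n)
        = v * ((FreeMonoid.of s : FreeMonoid Letter) : DAM n) → u = v) u v ?_ h
  intro u₀ v₀ h
  rw [← Con.coe_mul, ← Con.coe_mul, dam_eq_iff] at h
  obtain ⟨k, c⟩ := h
  have c0 : Chain n k (toList u₀ ++ [s]) (toList v₀ ++ [s]) := c
  obtain ⟨j, _, c'⟩ := cancel_last hn k s (toList u₀) (toList v₀) c0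
  exact dam_eq_iff.mpr ⟨j, c'⟩

lemma left_cancel {n : ℕ} (hn : 1 ≤ n) (x u v : DAM n) (h : x * u = x * v) : u = v := by
  have aux : ∀ (l : List Letter) (u v : DAM n),
      ((ofList l : FreeMonoid Letter) : DAM n) * u
        = ((ofList l : FreeMonoid Letter) : DAM n) * v → u = v := by
    intro l
    induction l with
    | nil =>
      intro u v h
      simpa using h
    | cons s l ih =>
      intro u v h
      rw [ofList_cons, Con.coe_mul, mul_assoc, mul_assoc] at h
      exact ih _ _ (gen_left_cancel hn s _ _ h)
  refine Con.induction_on (C := fun x => x * u = x * v → u = v) x ?_ h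
  intro w h
  exact aux (toList w) u v h

lemma right_cancel {n : ℕ} (hn : 1 ≤ n) (x u v : DAM n) (h : u * x = v * x) : u = v := by
  have aux : ∀ (l : List Letter) (u v : DAM n),
      u * ((ofList l : FreeMonoid Letter) : DAM n)
        = v * ((ofList l : FreeMonoid Letter) : DAM n) → u = v := by
    intro l
    induction l using List.reverseRecOn with
    | nil =>
      intro u v h
      simpa using h
    | append_singleton l s ih =>
      intro u v h
      rw [ofList_append, ofList_singleton, Con.coe_mul, ← mul_assoc, ← mul_assoc] at h
      exact ih _ _ (gen_right_cancel hn s _ _ h)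
  refine Con.induction_on (C := fun x => u * x = v * x → u = v) x ?_ h
  intro w h
  exact aux (toList w) u v h

/-! ### The Garside element and common multiples -/

/-- The Garside element `Δ` of `DAM n`. -/
def Dlt (n : ℕ) : DAM n := ((altWord la lb n : FreeMonoid Letter) : DAM n)

lemma dlt_eq {n : ℕ} (t : Letter) :
    ((FreeMonoid.ofList (rel n t) : FreeMonoid Letter) : DAM n) = Dlt n := by
  rcases (show t = la ∨ t = lb by revert t; decide) with rfl | rfl
  · rw [rel_la]; rfl
  · rw [rel_lb]
    exact ((braidCon n).eq).mpr (ConGen.Rel.symm (ConGen.Rel.of _ _ ⟨rfl, rfl⟩))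

lemma rel_snoc {n : ℕ} (t : Letter) :
    rel n t ++ [if Even n then t else other t] = t :: rel n (other t) := by
  show rel n t ++ [if Even n then t else other t] = t :: altList (other t) (other (other t)) n
  rw [other_other]
  unfold rel
  rw [← altList_succ_last t (other t) n]
  rfl

lemma dlt_mul_gen {n : ℕ} (c : Letter) :
    ∃ c', Dlt n * ((FreeMonoid.of c : FreeMonoid Letter) : DAM n)
      = ((FreeMonoid.of c' : FreeMonoid Letter) : DAM n) * Dlt n := by
  refine ⟨if Even n then c else other c, ?_⟩
  set t : Letter := if Even n then c else other c with ht
  have hc : (if Even n then t else other t) = c := by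
    by_cases h : Even n <;> simp [h, ht, other_other]
  have key : (ofList (rel n t) : FreeMonoid Letter) * FreeMonoid.of c
      = FreeMonoid.of t * ofList (rel n (other t)) := by
    rw [← hc]
    show ofList (rel n t) * ofList [if Even n then t else other t]
        = ofList [t] * ofList (rel n (other t))
    rw [← ofList_append, ← ofList_append, rel_snoc]
    rfl
  calc Dlt n * ((FreeMonoid.of c : FreeMonoid Letter) : DAM n)
      = ((ofList (rel n t) : FreeMonoid Letter) : DAM n)
        * ((FreeMonoid.of c : FreeMonoid Letter) : DAM n) := by rw [dlt_eq]
    _ = ((ofList (rel n t) * FreeMonoid.of c : FreeMonoid Letter) : DAM n) :=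
        (Con.coe_mul _ _).symm
    _ = ((FreeMonoid.of t * ofList (rel n (other t)) : FreeMonoid Letter) : DAM n) := by
        rw [key]
    _ = ((FreeMonoid.of t : FreeMonoid Letter) : DAM n)
        * ((ofList (rel n (other t)) : FreeMonoid Letter) : DAM n) := Con.coe_mul _ _
    _ = ((FreeMonoid.of t : FreeMonoid Letter) : DAM n) * Dlt n := by rw [dlt_eq]

lemma dlt_mul {n : ℕ} (m : DAM n) : ∃ m', Dlt n * m = m' * Dlt n := by
  refine Con.induction_on m ?_
  intro w
  induction w using FreeMonoid.recOn with
  | one =>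
    refine ⟨1, ?_⟩
    show Dlt n * ((1 : FreeMonoid Letter) : DAM n) = 1 * Dlt n
    rw [Con.coe_one, mul_one, one_mul]
  | of_mul c xs ih =>
    obtain ⟨c', hc'⟩ := dlt_mul_gen (n := n) c
    obtain ⟨m', hm'⟩ := ih
    refine ⟨((FreeMonoid.of c' : FreeMonoid Letter) : DAM n) * m', ?_⟩
    rw [Con.coe_mul, ← mul_assoc, hc', mul_assoc, hm', ← mul_assoc]

lemma dlt_pow_mul {n : ℕ} (j : ℕ) (m : DAM n) :
    ∃ m', Dlt n ^ j * m = m' * Dlt n ^ j := by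
  induction j generalizing m with
  | zero => exact ⟨m, by simp⟩
  | succ j ih =>
    obtain ⟨m₁, h₁⟩ := dlt_mul (n := n) m
    obtain ⟨m₂, h₂⟩ := ih m₁
    refine ⟨m₂, ?_⟩
    rw [pow_succ, mul_assoc, h₁, ← mul_assoc, h₂, mul_assoc]

lemma dlt_last {n : ℕ} (hn : 1 ≤ n) (t : Letter) :
    ∃ w : List Letter, Dlt n
      = ((FreeMonoid.ofList w : FreeMonoid Letter) : DAM n)
        * ((FreeMonoid.of t : FreeMonoid Letter) : DAM n) := by
  refine ⟨altList (if Even (n - 1) then t else other t)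
    (other (if Even (n - 1) then t else other t)) (n - 1), ?_⟩
  set t₀ : Letter := if Even (n - 1) then t else other t with ht₀
  have hlast : (if Even (n - 1) then t₀ else other t₀) = t := by
    by_cases h : Even (n - 1) <;> simp [h, ht₀, other_other]
  rw [← dlt_eq (n := n) t₀]
  have hsplit : rel n t₀ = altList t₀ (other t₀) (n - 1) ++ [t] := by
    unfold rel
    conv_lhs => rw [← Nat.succ_pred_eq_of_pos hn, altList_succ_last]
    simp only [Nat.pred_eq_sub_one]
    rw [hlast]
  rw [hsplit, ofList_append, Con.coe_mul]
  rfl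

lemma exists_mul_eq_dlt_pow {n : ℕ} (hn : 1 ≤ n) (l : List Letter) :
    ∃ x : DAM n, x * ((FreeMonoid.ofList l : FreeMonoid Letter) : DAM n)
      = Dlt n ^ l.length := by
  induction l using List.reverseRecOn with
  | nil =>
    refine ⟨1, ?_⟩
    show (1 : DAM n) * ((1 : FreeMonoid Letter) : DAM n) = Dlt n ^ (0 : ℕ)
    rw [Con.coe_one, mul_one, pow_zero]
  | append_singleton l t ih =>
    obtain ⟨x, hx⟩ := ih
    obtain ⟨w, hw⟩ := dlt_last hn (n := n) t
    obtain ⟨m', hm'⟩ := dlt_pow_mul (n := n) l.length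
      ((FreeMonoid.ofList w : FreeMonoid Letter) : DAM n)
    refine ⟨m' * x, ?_⟩
    rw [List.length_append, List.length_singleton, ofList_append, Con.coe_mul]
    rw [show m' * x * (((ofList l : FreeMonoid Letter) : DAM n)
        * ((ofList [t] : FreeMonoid Letter) : DAM n))
      = (m' * (x * ((ofList l : FreeMonoid Letter) : DAM n)))
        * ((ofList [t] : FreeMonoid Letter) : DAM n) by
        simp only [mul_assoc]]
    rw [hx, ← hm', mul_assoc, ofList_singleton, ← hw, pow_succ]

lemma ore_exists {n : ℕ} (hn : 1 ≤ n) (r s : DAM n) :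
    ∃ p : DAM n × DAM n, p.2 * r = p.1 * s := by
  refine Con.induction_on (C := fun r => ∃ p : DAM n × DAM n, p.2 * r = p.1 * s) r ?_
  intro wr
  refine Con.induction_on (C := fun s => ∃ p : DAM n × DAM n,
    p.2 * ((wr : FreeMonoid Letter) : DAM n) = p.1 * s) s ?_
  intro ws
  obtain ⟨x, hx0⟩ := exists_mul_eq_dlt_pow hn (toList wr)
  obtain ⟨y, hy0⟩ := exists_mul_eq_dlt_pow hn (toList ws)
  have hx : x * ((wr : FreeMonoid Letter) : DAM n) = Dlt n ^ (toList wr).length := hx0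
  have hy : y * ((ws : FreeMonoid Letter) : DAM n) = Dlt n ^ (toList ws).length := hy0
  refine ⟨(Dlt n ^ (toList wr).length * y, Dlt n ^ (toList ws).length * x), ?_⟩
  show Dlt n ^ (toList ws).length * x * _ = Dlt n ^ (toList wr).length * y * _
  rw [mul_assoc, mul_assoc, hx, hy, ← pow_add, ← pow_add, Nat.add_comm]

/-- The whole monoid `DAM (m+1)` is a left Ore set in itself. -/
noncomputable instance oreSetInst (m : ℕ) :
    OreLocalization.OreSet (⊤ : Submonoid (DAM (m + 1))) where
  ore_right_cancel := fun r₁ r₂ s h =>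
    ⟨1, by rw [right_cancel (Nat.succ_le_succ (Nat.zero_le m)) (s : DAM (m + 1)) r₁ r₂ h]⟩
  oreNum := fun r s =>
    (ore_exists (Nat.succ_le_succ (Nat.zero_le m)) r (s : DAM (m + 1))).choose.1
  oreDenom := fun r s =>
    ⟨(ore_exists (Nat.succ_le_succ (Nat.zero_le m)) r (s : DAM (m + 1))).choose.2, Submonoid.mem_top _⟩
  ore_eq := fun r s =>
    (ore_exists (Nat.succ_le_succ (Nat.zero_le m)) r (s : DAM (m + 1))).choose_spec

/-- The Ore localization of `DAM (m+1)` at itself: the group of fractions. -/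
abbrev Loc (m : ℕ) : Type :=
  OreLocalization (⊤ : Submonoid (DAM (m + 1))) (DAM (m + 1))

noncomputable instance locGroup (m : ℕ) : Group (Loc m) :=
  { (inferInstance : Monoid (Loc m)) with
    inv := OreLocalization.liftExpand
      (fun (r : DAM (m + 1)) (s : (⊤ : Submonoid (DAM (m + 1)))) =>
        ((s : DAM (m + 1)) /ₒ ⟨r, Submonoid.mem_top r⟩ : Loc m))
      (fun r t s _ => OreLocalization.expand _ _ t (Submonoid.mem_top _))
    inv_mul_cancel := fun a => by
      induction a using OreLocalization.ind with
      | _ r s =>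
        show OreLocalization.liftExpand _ _ (r /ₒ s) * (r /ₒ s) = 1
        rw [OreLocalization.liftExpand_of]
        exact OreLocalization.mul_inv s ⟨r, Submonoid.mem_top r⟩ }

lemma numeratorHom_inj (m : ℕ) :
    Function.Injective
      (OreLocalization.numeratorHom : DAM (m + 1) →* Loc m) := by
  intro r₁ r₂ h
  rw [OreLocalization.numeratorHom_apply, OreLocalization.numeratorHom_apply,
    OreLocalization.oreDiv_eq_iff] at h
  obtain ⟨u, v, h1, h2⟩ := h
  have hu : (u : DAM (m + 1)) = v := by simpa using h2
  have h1' : (u : DAM (m + 1)) * r₂ = (u : DAM (m + 1)) * r₁ := by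
    simpa [Submonoid.smul_def, hu] using h1
  exact (left_cancel (Nat.succ_le_succ (Nat.zero_le m)) _ _ _ h1').symm

/-- The images of the generators in the group of fractions. -/
noncomputable def fLetter (m : ℕ) : Letter → Loc m := fun s =>
  OreLocalization.numeratorHom (((FreeMonoid.of s : FreeMonoid Letter)) : DAM (m + 1))

lemma lift_toFG (m : ℕ) (w : FreeMonoid Letter) :
    FreeGroup.lift (fLetter m) (toFG w)
      = OreLocalization.numeratorHom ((w : FreeMonoid Letter) : DAM (m + 1)) := by
  induction w using FreeMonoid.recOn with
  | one =>
    rw [map_one, map_one]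
    rw [show ((1 : FreeMonoid Letter) : DAM (m + 1)) = 1 from Con.coe_one]
    rw [map_one]
  | of_mul x xs ih =>
    rw [map_mul, map_mul, ih, Con.coe_mul, map_mul]
    congr 1
    show FreeGroup.lift (fLetter m) (toFG (FreeMonoid.of x)) = _
    rw [show toFG (FreeMonoid.of x) = FreeGroup.of x from rfl, FreeGroup.lift_apply_of]
    rfl

lemma braid_rels_mapped (m : ℕ) :
    ∀ r ∈ braidRels (m + 1), FreeGroup.lift (fLetter m) r = 1 := by
  intro r hr
  have hr' : r = toFG (altWord la lb (m + 1)) * (toFG (altWord lb la (m + 1)))⁻¹ :=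
    Set.mem_singleton_iff.mp hr
  subst hr'
  rw [map_mul, map_inv, lift_toFG, lift_toFG]
  have hP : ((altWord la lb (m + 1) : FreeMonoid Letter) : DAM (m + 1))
      = ((altWord lb la (m + 1) : FreeMonoid Letter) : DAM (m + 1)) :=
    ((braidCon (m + 1)).eq).mpr (ConGen.Rel.of _ _ ⟨rfl, rfl⟩)
  rw [hP, mul_inv_cancel]

/-- The homomorphism from `DA (m+1)` to the group of fractions of `DAM (m+1)`. -/
noncomputable def psi (m : ℕ) : DA (m + 1) →* Loc m :=
  PresentedGroup.toGroup (braid_rels_mapped m)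

lemma psi_toDA (m : ℕ) (w : FreeMonoid Letter) :
    psi m (toDA (m + 1) w)
      = OreLocalization.numeratorHom ((w : FreeMonoid Letter) : DAM (m + 1)) := by
  induction w using FreeMonoid.recOn with
  | one =>
    rw [map_one, map_one]
    rw [show ((1 : FreeMonoid Letter) : DAM (m + 1)) = 1 from Con.coe_one]
    rw [map_one]
  | of_mul x xs ih =>
    rw [map_mul, map_mul, ih, Con.coe_mul, map_mul]
    congr 1
    have h1 : toDA (m + 1) (FreeMonoid.of x)
        = PresentedGroup.of (rels := braidRels (m + 1)) x :=
      FreeMonoid.lift_eval_of _ _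
    rw [h1]
    exact PresentedGroup.toGroup.of _

lemma dam_to_da_injective (m : ℕ) : Function.Injective (DAMtoDA (m + 1)) := by
  intro x y h
  refine Con.induction_on₂
    (C := fun x y => DAMtoDA (m + 1) x = DAMtoDA (m + 1) y → x = y) x y ?_ h
  intro w₁ w₂ h
  have h1 : toDA (m + 1) w₁ = toDA (m + 1) w₂ := by
    have e1 : DAMtoDA (m + 1) ((w₁ : FreeMonoid Letter) : DAM (m + 1))
        = toDA (m + 1) w₁ := Con.lift_coe _ _
    have e2 : DAMtoDA (m + 1) ((w₂ : FreeMonoid Letter) : DAM (m + 1))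
        = toDA (m + 1) w₂ := Con.lift_coe _ _
    rw [← e1, ← e2, h]
  have h2 := congrArg (psi m) h1
  rw [psi_toDA, psi_toDA] at h2
  exact numeratorHom_inj m h2

end Inj


/-- For every `n ≥ 2`, the natural monoid homomorphism from the dihedral
Artin monoid `DA_n⁺` to the dihedral Artin group `DA_n` (induced by the identity on the
generators `a`, `b`) is injective. -/
theorem dihedral_monoid_injects_in_group (n : ℕ) (hn : 2 ≤ n) :
    Function.Injective (DAMtoDA n) := by
  obtain ⟨m, rfl⟩ : ∃ m, n = m + 1 := ⟨n - 1, by omega⟩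
  exact Inj.dam_to_da_injective m

end ArtinSys
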